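/- For r ∈ ℕ, N ∈ ℕ, θ > 0, and disjoint increasing tuples with all m^{(s)} ≥ M for some large M, the joint block probability satisfies the two-sided bound: θ^r ∏_{s=1}^r N!/(θ + m^{(s)})^{N+1} ≤ P{⋂_{s=1}^r A(k₁^{(s)},...,k_N^{(s)}, m^{(s)})} ≤ θ^r ∏_{s=1}^r N!/(θ + m^{(s)} − (r+1)N − 1)^{N+1}, whenever θ + m^{(s)} − (r+1)N − 1 > 0 for all s. -/

import Mathlib

/-!
On the joint event the attachment variables `I 1, …, I M` (with `M` the largest `m_s`) are
constrained one at a time, so independence turns its probability into a product of one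
factor per customer: `θ / (θ + i - 1)` when customer `i = k_{s,0}` opens its block,
`p / (θ + i - 1)` when `i = k_{s,p}` joins one of the `p` earlier members of its block, and
`(θ + J i) / (θ + i - 1)` for a customer `i` outside the blocks, where `J i` is the number of
earlier customers that `i` may join, i.e. all but the members of blocks still open at `i`.
Since `J` grows by one at each customer outside the blocks, stays put inside a block and jumps
by `N + 1` when a block is completed, the denominator `θ (θ + 1) ⋯ (θ + M - 1)` telescopes
against the numerators and leaves, for each block, the rising factorial
`(θ + J m_s) ⋯ (θ + J m_s + N)`. As `m_s - 1 - r N ≤ J m_s ≤ m_s - N - 1`, comparing each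
factor with `θ + m_s` and with `θ + m_s - (r + 1) N - 1` gives the two bounds.
-/

open MeasureTheory ProbabilityTheory Finset

/-- The event that, in the Chinese restaurant process built from the attachment
variables `I`, the set `{k 0, …, k N}` (with `k 0 < … < k N = m`) is a block of
the partition `P_m` at step `m`. -/
def crpBlockEvent {Ω : Type*} (I : ℕ → Ω → ℕ) {N : ℕ} (k : Fin (N + 1) → ℕ) : Set Ω :=
  {ω | I (k 0) ω = k 0 ∧
    (∀ p : Fin (N + 1), p ≠ 0 → ∃ q, q < p ∧ I (k p) ω = k q) ∧
    (∀ i : ℕ, k 0 < i → i ≤ k (Fin.last N) → (∀ p, k p ≠ i) →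
      ∀ q : Fin (N + 1), (k q : ℕ) < i → I i ω ≠ k q)}

theorem Finset.prod_Ico_eq_prod_prod_Ico_of_monotone {α : Type*} [CommMonoid α] (g : ℕ → α)
    {F : ℕ → ℕ} (hF : Monotone F) {a b : ℕ} (hab : a ≤ b) :
    ∏ j ∈ Ico (F a) (F b), g j = ∏ i ∈ Ico a b, ∏ j ∈ Ico (F i) (F (i + 1)), g j := by
  induction b, hab using Nat.le_induction with
  | base => simp
  | succ b hab ih =>
    rw [prod_Ico_succ_top hab, ← ih, prod_Ico_consecutive _ (hF hab) (hF b.le_succ)]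

structure IsBlockFamily {r N : ℕ} (k : Fin r → Fin (N + 1) → ℕ) : Prop where
  strictMono : ∀ s, StrictMono (k s)
  one_le : ∀ s, 1 ≤ k s 0
  injective : Function.Injective (Function.uncurry k)

namespace IsBlockFamily

variable {r N : ℕ} {k : Fin r → Fin (N + 1) → ℕ}

theorem one_le_apply (hk : IsBlockFamily k) (s : Fin r) (p : Fin (N + 1)) : 1 ≤ k s p :=
  (hk.one_le s).trans ((hk.strictMono s).monotone (Fin.zero_le p))

theorem apply_le_last (hk : IsBlockFamily k) (s : Fin r) (p : Fin (N + 1)) :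
    k s p ≤ k s (Fin.last N) :=
  (hk.strictMono s).monotone (Fin.le_last p)

theorem apply_inj (hk : IsBlockFamily k) {s s' : Fin r} {p p' : Fin (N + 1)} :
    k s p = k s' p' ↔ s = s' ∧ p = p' :=
  ⟨fun h => Prod.ext_iff.mp (@hk.injective (s, p) (s', p') h), fun ⟨hs, hp⟩ => hs ▸ hp ▸ rfl⟩

end IsBlockFamily

section Counting

variable {r N : ℕ} (k : Fin r → Fin (N + 1) → ℕ)

def blockValues : Finset ℕ := univ.image (Function.uncurry k)

def blocked (i : ℕ) : Finset (Fin r × Fin (N + 1)) :=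
  univ.filter fun sp => k sp.1 sp.2 < i ∧ i ≤ k sp.1 (Fin.last N)

/-- The number of earlier customers that a customer `i` outside the blocks may join: all but the
members of blocks still open at `i` (`joinable_add_card_blocked`), counted here so that its
increments are evident. -/
def joinable (i : ℕ) : ℕ :=
  #(Ico 1 i \ blockValues k) + (N + 1) * #(univ.filter fun s => k s (Fin.last N) < i)

/-- The paper's falling factorial `(θ + m_s - l_s - 1)^{\underline{N+1}}`, written as the rising
factorial from `θ + joinable k m_s`. -/
def blockDenominator (θ : ℝ) (s : Fin r) : ℝ :=
  ∏ j ∈ Ico (joinable k (k s (Fin.last N))) (joinable k (k s (Fin.last N)) + (N + 1)), (θ + j)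

variable {k}

theorem card_Ico_inter_blockValues (hk : IsBlockFamily k) (i : ℕ) :
    #(Ico 1 i ∩ blockValues k) =
      #(univ.filter fun sp : Fin r × Fin (N + 1) => k sp.1 sp.2 < i) := by
  rw [← card_image_of_injective _ hk.injective]
  congr 1
  ext v
  simp only [blockValues, mem_inter, mem_Ico, mem_image, mem_filter, mem_univ, true_and,
    Prod.exists, Function.uncurry_apply_pair]
  constructor
  · rintro ⟨⟨-, hvi⟩, s, p, rfl⟩
    exact ⟨s, p, hvi, rfl⟩
  · rintro ⟨s, p, hpi, rfl⟩
    exact ⟨⟨hk.one_le_apply s p, hpi⟩, s, p, rfl⟩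

theorem joinable_add_card_blocked (hk : IsBlockFamily k) {i : ℕ} (hi : 1 ≤ i) :
    joinable k i + #(blocked k i) + 1 = i := by
  have hsplit := card_sdiff_add_card_inter (Ico 1 i) (blockValues k)
  rw [card_Ico_inter_blockValues hk, Nat.card_Ico,
    ← card_filter_add_card_filter_not
      (p := fun sp : Fin r × Fin (N + 1) => i ≤ k sp.1 (Fin.last N)),
    filter_filter, filter_filter] at hsplit
  have hclosed : (univ.filter fun sp : Fin r × Fin (N + 1) =>
      k sp.1 sp.2 < i ∧ ¬i ≤ k sp.1 (Fin.last N)) =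
      (univ.filter fun s => k s (Fin.last N) < i) ×ˢ univ := by
    ext ⟨s, p⟩
    have := hk.apply_le_last s p
    simp only [mem_filter, mem_univ, true_and, mem_product, and_true, not_le]
    omega
  rw [hclosed, card_product, card_univ, Fintype.card_fin] at hsplit
  unfold joinable blocked
  rw [mul_comm (N + 1)]
  omega

theorem joinable_mono : Monotone (joinable k) := by
  intro i j hij
  unfold joinable
  gcongr

theorem joinable_one (hk : IsBlockFamily k) : joinable k 1 = 0 := by
  have := joinable_add_card_blocked hk (le_refl 1)
  omega

theorem joinable_succ {i : ℕ} (hi : 1 ≤ i) :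
    joinable k (i + 1) = joinable k i + #({i} \ blockValues k) +
      (N + 1) * #(univ.filter fun s => k s (Fin.last N) = i) := by
  have hIco : Ico 1 (i + 1) \ blockValues k =
      (Ico 1 i \ blockValues k) ∪ ({i} \ blockValues k) := by
    rw [← union_sdiff_distrib, ← insert_Ico_right_eq_Ico_add_one hi, insert_eq, union_comm]
  have hclosed : (univ.filter fun s => k s (Fin.last N) < i + 1) =
      (univ.filter fun s => k s (Fin.last N) < i) ∪
        (univ.filter fun s => k s (Fin.last N) = i) := by
    rw [← filter_or]
    ext s
    simp only [mem_filter, mem_univ, true_and]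
    omega
  unfold joinable
  rw [hIco, hclosed, card_union_of_disjoint, card_union_of_disjoint]
  · ring
  · exact disjoint_filter.mpr fun _ _ h h' => h.ne h'
  · exact (disjoint_singleton_right.mpr right_notMem_Ico).mono sdiff_le sdiff_le

theorem joinable_succ_of_notMem {i : ℕ} (hi1 : 1 ≤ i)
    (hi : i ∉ blockValues k) : joinable k (i + 1) = joinable k i + 1 := by
  have hlast : (univ.filter fun s => k s (Fin.last N) = i) = ∅ :=
    filter_eq_empty_iff.mpr fun s _ hs =>
      hi (mem_image.mpr ⟨(s, Fin.last N), mem_univ _, hs⟩)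
  rw [joinable_succ hi1, sdiff_eq_self_of_disjoint (disjoint_singleton_left.mpr hi), hlast]
  simp

theorem joinable_succ_apply (hk : IsBlockFamily k) (s : Fin r) (p : Fin (N + 1)) :
    joinable k (k s p + 1) = joinable k (k s p) + if p = Fin.last N then N + 1 else 0 := by
  have hlast : (univ.filter fun s' => k s' (Fin.last N) = k s p) =
      if p = Fin.last N then {s} else ∅ := by
    ext s'
    simp only [mem_filter, mem_univ, true_and, hk.apply_inj]
    split_ifs <;> simp_all [eq_comm]
  rw [joinable_succ (hk.one_le_apply s p), hlast,
    (sdiff_eq_empty_iff_subset (s := {k s p}) (t := blockValues k)).mpr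
      (singleton_subset_iff.mpr (mem_image.mpr ⟨(s, p), mem_univ _, rfl⟩))]
  split_ifs <;> simp

theorem card_blocked_le (i : ℕ) : #(blocked k i) ≤ r * N := by
  calc #(blocked k i) ≤ #((univ : Finset (Fin r)) ×ˢ univ.erase (Fin.last N)) := by
        refine card_le_card fun sp hsp => ?_
        simp only [blocked, mem_filter, mem_univ, true_and] at hsp
        simp only [mem_product, mem_univ, mem_erase, ne_eq, true_and, and_true]
        rintro hp
        rw [hp] at hsp
        omega
    _ = r * N := by simp

theorem le_card_blocked_last (hk : IsBlockFamily k) (s : Fin r) :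
    N ≤ #(blocked k (k s (Fin.last N))) := by
  calc N = #(({s} : Finset (Fin r)) ×ˢ univ.erase (Fin.last N)) := by simp
    _ ≤ #(blocked k (k s (Fin.last N))) := by
        refine card_le_card fun sp hsp => ?_
        simp only [mem_product, mem_singleton, mem_erase, mem_univ, and_true] at hsp
        simp only [blocked, mem_filter, mem_univ, true_and, hsp.1, le_rfl, and_true]
        exact (hk.strictMono s) (Fin.lt_last_iff_ne_last.mpr hsp.2)

theorem blockValues_subset_Icc (hk : IsBlockFamily k) {M : ℕ}
    (hM : ∀ s, k s (Fin.last N) ≤ M) : blockValues k ⊆ Icc 1 M := by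
  simp only [blockValues, image_subset_iff, mem_univ, mem_Icc, forall_const, Prod.forall,
    Function.uncurry_apply_pair]
  exact fun s p => ⟨hk.one_le_apply s p, (hk.apply_le_last s p).trans (hM s)⟩

theorem prod_Icc_eq_prod_sdiff_mul_prod_blocks {α : Type*} [CommMonoid α]
    (hk : IsBlockFamily k) {M : ℕ} (hM : ∀ s, k s (Fin.last N) ≤ M) (f : ℕ → α) :
    ∏ i ∈ Icc 1 M, f i = (∏ i ∈ Icc 1 M \ blockValues k, f i) * ∏ s, ∏ p, f (k s p) := by
  rw [← prod_sdiff (blockValues_subset_Icc hk hM), blockValues,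
    prod_image fun _ _ _ _ h => hk.injective h, Fintype.prod_prod_type]
  rfl

theorem joinable_last_succ (hk : IsBlockFamily k) {M : ℕ} (hM : ∀ s, k s (Fin.last N) ≤ M) :
    joinable k (M + 1) = M := by
  have hempty : blocked k (M + 1) = ∅ :=
    filter_eq_empty_iff.mpr fun sp _ h => by have := hM sp.1; omega
  have := joinable_add_card_blocked hk (Nat.le_add_left 1 M)
  rw [hempty, card_empty] at this
  omega

theorem prod_Icc_eq_prod_joinable_mul_prod_blockDenominator (hk : IsBlockFamily k) {M : ℕ}
    (hM : ∀ s, k s (Fin.last N) ≤ M) (θ : ℝ) :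
    ∏ i ∈ Icc 1 M, (θ + i - 1) =
      (∏ i ∈ Icc 1 M \ blockValues k, (θ + joinable k i)) * ∏ s, blockDenominator k θ s := by
  have htele : ∏ i ∈ Icc 1 M, (θ + i - 1) =
      ∏ i ∈ Icc 1 M, ∏ j ∈ Ico (joinable k i) (joinable k (i + 1)), (θ + j) := by
    rw [← Ico_add_one_right_eq_Icc, ← prod_Ico_eq_prod_prod_Ico_of_monotone _ joinable_mono
      (Nat.le_add_left 1 M), joinable_one hk, joinable_last_succ hk hM]
    simpa [add_sub_assoc] using (prod_Ico_add' (fun i : ℕ => θ + (i : ℝ) - 1) 0 M 1).symm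
  rw [htele, prod_Icc_eq_prod_sdiff_mul_prod_blocks hk hM]
  congr 1
  · refine prod_congr rfl fun i hi => ?_
    rw [mem_sdiff, mem_Icc] at hi
    rw [joinable_succ_of_notMem hi.1.1 hi.2, Nat.Ico_succ_singleton, prod_singleton]
  · refine prod_congr rfl fun s _ => ?_
    simp_rw [joinable_succ_apply hk]
    rw [Fintype.prod_eq_single (Fin.last N) fun p hp => by simp [hp]]
    simp [blockDenominator]

theorem blockDenominator_pos {θ : ℝ} (hθ : 0 < θ) (s : Fin r) : 0 < blockDenominator k θ s :=
  prod_pos fun _ _ => by positivity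

theorem joinable_last_add_le (hk : IsBlockFamily k) (s : Fin r) :
    joinable k (k s (Fin.last N)) + (N + 1) ≤ k s (Fin.last N) := by
  have := joinable_add_card_blocked hk (hk.one_le_apply s (Fin.last N))
  have := le_card_blocked_last hk s
  omega

theorem last_le_joinable_last_add (hk : IsBlockFamily k) (s : Fin r) :
    k s (Fin.last N) ≤ joinable k (k s (Fin.last N)) + r * N + 1 := by
  have := joinable_add_card_blocked hk (hk.one_le_apply s (Fin.last N))
  have := card_blocked_le (k := k) (k s (Fin.last N))
  omega

theorem blockDenominator_le_pow (hk : IsBlockFamily k) {θ : ℝ} (hθ : 0 ≤ θ) (s : Fin r) :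
    blockDenominator k θ s ≤ (θ + k s (Fin.last N)) ^ (N + 1) := by
  have hlast := joinable_last_add_le hk s
  calc _ ≤ ∏ _j ∈ Ico (joinable k (k s (Fin.last N))) (joinable k (k s (Fin.last N)) + (N + 1)),
        (θ + k s (Fin.last N)) := by
        refine prod_le_prod (fun _ _ => by positivity) fun j hj => ?_
        have : j ≤ k s (Fin.last N) := by rw [mem_Ico] at hj; omega
        gcongr
    _ = _ := by simp

theorem pow_le_blockDenominator (hk : IsBlockFamily k) {θ : ℝ} (s : Fin r)
    (hbase : 0 ≤ θ + k s (Fin.last N) - ((r : ℝ) + 1) * N - 1) :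
    (θ + k s (Fin.last N) - ((r : ℝ) + 1) * N - 1) ^ (N + 1) ≤ blockDenominator k θ s := by
  have hlast : (k s (Fin.last N) : ℝ) ≤ joinable k (k s (Fin.last N)) + r * N + 1 := by
    exact_mod_cast last_le_joinable_last_add hk s
  calc _ = ∏ _j ∈ Ico (joinable k (k s (Fin.last N))) (joinable k (k s (Fin.last N)) + (N + 1)),
        (θ + k s (Fin.last N) - ((r : ℝ) + 1) * N - 1) := by simp
    _ ≤ _ := by
        refine prod_le_prod (fun _ _ => hbase) fun j hj => ?_
        have : (joinable k (k s (Fin.last N)) : ℝ) ≤ j := by exact_mod_cast (mem_Ico.mp hj).1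
        linarith [(Nat.cast_nonneg N : (0 : ℝ) ≤ N)]

end Counting

section Events

variable {N : ℕ}

def blockConstraint (k : Fin (N + 1) → ℕ) (i : ℕ) : Set ℕ :=
  {v | (k 0 = i → v = i) ∧ (∀ p, p ≠ 0 → k p = i → ∃ q, q < p ∧ v = k q) ∧
    (k 0 < i → i ≤ k (Fin.last N) → (∀ p, k p ≠ i) → ∀ q, k q < i → v ≠ k q)}

theorem crpBlockEvent_eq_setOf {Ω : Type*} (I : ℕ → Ω → ℕ) (k : Fin (N + 1) → ℕ) :
    crpBlockEvent I k = {ω | ∀ i, I i ω ∈ blockConstraint k i} := by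
  ext ω
  simp only [crpBlockEvent, blockConstraint, Set.mem_ofPred_eq, forall_and]
  refine and_congr ⟨fun h _ hi => hi ▸ h, fun h => h _ rfl⟩
    (and_congr ⟨fun h i p hp hi => hi ▸ h p hp, fun h p hp => h _ p hp rfl⟩ Iff.rfl)

theorem blockConstraint_eq_univ {k : Fin (N + 1) → ℕ} (hk : Monotone k) {i : ℕ}
    (hi : i < k 0 ∨ k (Fin.last N) < i) : blockConstraint k i = Set.univ := by
  have := hk (Fin.zero_le (Fin.last N))
  refine Set.eq_univ_of_forall fun v => ⟨fun h => ?_, fun p _ h => ?_, fun h h' => ?_⟩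
  · omega
  · have := hk (Fin.zero_le p); have := hk (Fin.le_last p); omega
  · omega

variable {r : ℕ}

def allowedValues (k : Fin r → Fin (N + 1) → ℕ) (i : ℕ) : Set ℕ :=
  ⋂ s, blockConstraint (k s) i

variable {k : Fin r → Fin (N + 1) → ℕ}

theorem iInter_crpBlockEvent_eq {Ω : Type*} (I : ℕ → Ω → ℕ) (hk : IsBlockFamily k) {M : ℕ}
    (hM : ∀ s, k s (Fin.last N) ≤ M) :
    ⋂ s, crpBlockEvent I (k s) = ⋂ i ∈ Icc 1 M, I i ⁻¹' allowedValues k i := by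
  ext ω
  simp only [crpBlockEvent_eq_setOf, allowedValues, Set.mem_iInter, Set.mem_ofPred_eq,
    Set.mem_preimage, mem_Icc]
  refine ⟨fun h i _ s => h s i, fun h s i => ?_⟩
  by_cases hi : 1 ≤ i ∧ i ≤ M
  · exact h i hi s
  · rw [blockConstraint_eq_univ (hk.strictMono s).monotone]
    · trivial
    · have := hk.one_le s; have := hM s; omega

theorem mem_blockConstraint_of_ne (hk : IsBlockFamily k) {s s' : Fin r} (hs : s' ≠ s)
    (p q : Fin (N + 1)) : k s q ∈ blockConstraint (k s') (k s p) :=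
  ⟨fun h => absurd (hk.apply_inj.mp h).1 hs, fun _ _ h => absurd (hk.apply_inj.mp h).1 hs,
    fun _ _ _ _ _ h => hs (hk.apply_inj.mp h).1.symm⟩

theorem allowedValues_apply (hk : IsBlockFamily k) (s : Fin r) (p : Fin (N + 1)) :
    allowedValues k (k s p) = {v | (p = 0 → v = k s p) ∧ (p ≠ 0 → ∃ q, q < p ∧ v = k s q)} := by
  ext v
  simp only [allowedValues, Set.mem_iInter, Set.mem_ofPred_eq]
  constructor
  · intro h
    obtain ⟨hzero, hlater, -⟩ := h s
    exact ⟨fun hp => hzero (hp ▸ rfl), fun hp => hlater p hp rfl⟩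
  · rintro ⟨hzero, hlater⟩ s'
    by_cases hs : s' = s
    · subst hs
      refine ⟨fun h => hzero (hk.apply_inj.mp h).2.symm, fun p' _ h => ?_, fun _ _ h => ?_⟩
      · exact (hk.apply_inj.mp h).2 ▸ hlater ((hk.apply_inj.mp h).2 ▸ ‹p' ≠ 0›)
      · exact absurd rfl (h p)
    · obtain ⟨q, rfl⟩ : ∃ q, v = k s q := by
        by_cases hp : p = 0
        · exact ⟨p, hzero hp⟩
        · obtain ⟨q, -, hq⟩ := hlater hp
          exact ⟨q, hq⟩
      exact mem_blockConstraint_of_ne hk hs p q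

theorem allowedValues_of_notMem (hk : IsBlockFamily k) {i : ℕ} (hi : i ∉ blockValues k) :
    allowedValues k i = (↑((blocked k i).image (Function.uncurry k)))ᶜ := by
  have hne : ∀ s p, k s p ≠ i := fun s p h => hi (mem_image.mpr ⟨(s, p), mem_univ _, h⟩)
  ext v
  simp only [allowedValues, blockConstraint, Set.mem_iInter, Set.mem_ofPred_eq, Set.mem_compl_iff,
    coe_image, Set.mem_image, mem_coe, blocked, mem_filter, mem_univ, true_and, Prod.exists,
    Function.uncurry_apply_pair, not_exists, not_and]
  constructor
  · rintro h s q ⟨hq, hiq⟩ rfl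
    exact (h s).2.2 (lt_of_le_of_lt ((hk.strictMono s).monotone (Fin.zero_le q)) hq) hiq
      (hne s) q hq rfl
  · intro h s
    exact ⟨fun h0 => absurd h0 (hne s 0), fun p _ hp => absurd hp (hne s p),
      fun _ hiq _ q hq hv => h s q ⟨hq, hiq⟩ hv.symm⟩

end Events

theorem prod_fin_ite_eq_mul_factorial (θ : ℝ) (N : ℕ) :
    ∏ p : Fin (N + 1), (if p = 0 then θ else (p : ℝ)) = θ * N.factorial := by
  rw [Fin.prod_univ_succ, if_pos rfl]
  simp only [Fin.succ_ne_zero, if_false, Fin.val_succ, Nat.cast_add, Nat.cast_one]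
  rw [Fin.prod_univ_eq_prod_range (fun j => (j : ℝ) + 1), ← prod_range_add_one_eq_factorial]
  push_cast
  rfl

theorem add_natCast_sub_one_pos {θ : ℝ} (hθ : 0 < θ) {n : ℕ} (hn : 1 ≤ n) : 0 < θ + n - 1 := by
  have : (1 : ℝ) ≤ n := by exact_mod_cast hn
  linarith

section Probability

variable {Ω : Type*} [MeasurableSpace Ω] {P : Measure Ω} {θ : ℝ} {I : ℕ → Ω → ℕ}

theorem measure_preimage_finset_of_subset_Ico {n : ℕ} (hmeas : Measurable (I n))
    (hjoin : ∀ v, 1 ≤ v → v < n → P {ω | I n ω = v} = ENNReal.ofReal (1 / (θ + n - 1)))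
    {F : Finset ℕ} (hF : F ⊆ Ico 1 n) :
    P (I n ⁻¹' F) = ENNReal.ofReal (#F / (θ + n - 1)) := by
  rw [← sum_measure_preimage_singleton F fun _ _ => hmeas (measurableSet_singleton _),
    sum_congr rfl (f := fun v => P (I n ⁻¹' {v}))
      fun v hv => hjoin v (mem_Ico.mp (hF hv)).1 (mem_Ico.mp (hF hv)).2,
    sum_const, nsmul_eq_mul, ← ENNReal.ofReal_natCast, ← ENNReal.ofReal_mul (Nat.cast_nonneg _),
    mul_one_div]

theorem measure_preimage_compl_finset_of_subset_Ico [IsProbabilityMeasure P] (hθ : 0 < θ)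
    {n : ℕ} (hn : 1 ≤ n) (hmeas : Measurable (I n))
    (hjoin : ∀ v, 1 ≤ v → v < n → P {ω | I n ω = v} = ENNReal.ofReal (1 / (θ + n - 1)))
    {F : Finset ℕ} (hF : F ⊆ Ico 1 n) :
    P (I n ⁻¹' (↑F)ᶜ) = ENNReal.ofReal ((θ + n - 1 - #F) / (θ + n - 1)) := by
  have hden := add_natCast_sub_one_pos hθ hn
  rw [Set.preimage_compl, prob_compl_eq_one_sub (hmeas F.measurableSet),
    measure_preimage_finset_of_subset_Ico hmeas hjoin hF, ← ENNReal.ofReal_one,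
    ← ENNReal.ofReal_sub _ (div_nonneg (Nat.cast_nonneg _) hden.le), sub_div, div_self hden.ne']

variable {r N : ℕ} {k : Fin r → Fin (N + 1) → ℕ}

theorem measure_allowedValues_apply (hmeas : ∀ n, Measurable (I n))
    (hnew : ∀ n : ℕ, 1 ≤ n → P {ω | I n ω = n} = ENNReal.ofReal (θ / (θ + n - 1)))
    (hjoin : ∀ n k : ℕ, 1 ≤ k → k < n → P {ω | I n ω = k} = ENNReal.ofReal (1 / (θ + n - 1)))
    (hk : IsBlockFamily k) (s : Fin r) (p : Fin (N + 1)) :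
    P (I (k s p) ⁻¹' allowedValues k (k s p)) =
      ENNReal.ofReal ((if p = 0 then θ else (p : ℝ)) / (θ + k s p - 1)) := by
  rw [allowedValues_apply hk]
  split_ifs with hp
  · subst hp
    convert hnew _ (hk.one_le s) using 2
    ext ω
    simp
  · have hset : {v | (p = 0 → v = k s p) ∧ (p ≠ 0 → ∃ q, q < p ∧ v = k s q)} =
        ↑((Iio p).image (k s)) := by
      ext v
      simp [hp, eq_comm]
    have hsub : (Iio p).image (k s) ⊆ Ico 1 (k s p) := by
      simp only [image_subset_iff, mem_Iio, mem_Ico]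
      exact fun q hq => ⟨hk.one_le_apply s q, hk.strictMono s hq⟩
    rw [hset, measure_preimage_finset_of_subset_Ico (hmeas _) (hjoin _) hsub,
      card_image_of_injective _ (hk.strictMono s).injective, Fin.card_Iio]

theorem measure_allowedValues_of_notMem [IsProbabilityMeasure P] (hθ : 0 < θ)
    (hmeas : ∀ n, Measurable (I n))
    (hjoin : ∀ n k : ℕ, 1 ≤ k → k < n → P {ω | I n ω = k} = ENNReal.ofReal (1 / (θ + n - 1)))
    (hk : IsBlockFamily k) {i : ℕ} (hi1 : 1 ≤ i) (hi : i ∉ blockValues k) :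
    P (I i ⁻¹' allowedValues k i) = ENNReal.ofReal ((θ + joinable k i) / (θ + i - 1)) := by
  have hsub : (blocked k i).image (Function.uncurry k) ⊆ Ico 1 i := by
    simp only [image_subset_iff, blocked, mem_filter, mem_univ, true_and, mem_Ico]
    exact fun sp hsp => ⟨hk.one_le_apply sp.1 sp.2, hsp.1⟩
  have hcount : (i : ℝ) = joinable k i + #(blocked k i) + 1 := by
    exact_mod_cast (joinable_add_card_blocked hk hi1).symm
  rw [allowedValues_of_notMem hk hi,
    measure_preimage_compl_finset_of_subset_Ico hθ hi1 (hmeas i) (hjoin i) hsub,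
    card_image_of_injective _ hk.injective, hcount]
  ring_nf

end Probability

theorem prod_crp_weights_eq {r N : ℕ} {k : Fin r → Fin (N + 1) → ℕ} {θ : ℝ} (hθ : 0 < θ)
    (hk : IsBlockFamily k) {M : ℕ} (hM : ∀ s, k s (Fin.last N) ≤ M) :
    (∏ i ∈ Icc 1 M \ blockValues k, (θ + joinable k i) / (θ + i - 1)) *
        ∏ s, ∏ p : Fin (N + 1), (if p = 0 then θ else (p : ℝ)) / (θ + k s p - 1) =
      ∏ s, θ * N.factorial / blockDenominator k θ s := by
  have hfree : 0 < ∏ i ∈ Icc 1 M \ blockValues k, (θ + joinable k i) :=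
    prod_pos fun _ _ => by positivity
  have hden := (prod_Icc_eq_prod_sdiff_mul_prod_blocks hk hM fun i => θ + i - 1).symm.trans
    (prod_Icc_eq_prod_joinable_mul_prod_blockDenominator hk hM θ)
  simp only [prod_div_distrib, prod_fin_ite_eq_mul_factorial]
  rw [div_mul_div_comm, hden, mul_div_mul_left _ _ hfree.ne']

theorem measure_iInter_crpBlockEvent {Ω : Type*} [MeasurableSpace Ω] {P : Measure Ω}
    [IsProbabilityMeasure P] {θ : ℝ} (hθ : 0 < θ) {I : ℕ → Ω → ℕ}
    (hmeas : ∀ n, Measurable (I n)) (hindep : iIndepFun I P)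
    (hnew : ∀ n : ℕ, 1 ≤ n → P {ω | I n ω = n} = ENNReal.ofReal (θ / (θ + n - 1)))
    (hjoin : ∀ n k : ℕ, 1 ≤ k → k < n → P {ω | I n ω = k} = ENNReal.ofReal (1 / (θ + n - 1)))
    {r N : ℕ} {k : Fin r → Fin (N + 1) → ℕ} (hk : IsBlockFamily k) :
    P (⋂ s, crpBlockEvent I (k s)) =
      ENNReal.ofReal (∏ s, θ * N.factorial / blockDenominator k θ s) := by
  set M := univ.sup fun s => k s (Fin.last N)
  have hM (s : Fin r) : k s (Fin.last N) ≤ M := le_sup (f := fun s => k s (Fin.last N)) (mem_univ s)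
  have hfree (i : ℕ) (hi : i ∈ Icc 1 M \ blockValues k) : 1 ≤ i ∧ i ∉ blockValues k :=
    ⟨(mem_Icc.mp (mem_sdiff.mp hi).1).1, (mem_sdiff.mp hi).2⟩
  have hfree_nonneg (i : ℕ) (hi : i ∈ Icc 1 M \ blockValues k) :
      0 ≤ (θ + joinable k i) / (θ + i - 1) :=
    div_nonneg (by positivity) (add_natCast_sub_one_pos hθ (hfree i hi).1).le
  have hblock_nonneg (s : Fin r) (p : Fin (N + 1)) :
      0 ≤ (if p = 0 then θ else (p : ℝ)) / (θ + k s p - 1) :=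
    div_nonneg (by split_ifs <;> positivity) (add_natCast_sub_one_pos hθ (hk.one_le_apply s p)).le
  rw [iInter_crpBlockEvent_eq I hk hM, hindep.meas_biInter fun i _ => ⟨_, trivial, rfl⟩,
    prod_Icc_eq_prod_sdiff_mul_prod_blocks hk hM, ← prod_crp_weights_eq hθ hk hM,
    ENNReal.ofReal_mul (prod_nonneg hfree_nonneg), ENNReal.ofReal_prod_of_nonneg hfree_nonneg,
    ENNReal.ofReal_prod_of_nonneg fun s _ => prod_nonneg fun p _ => hblock_nonneg s p]
  congr 1
  · exact prod_congr rfl fun i hi =>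
      measure_allowedValues_of_notMem hθ hmeas hjoin hk (hfree i hi).1 (hfree i hi).2
  · refine prod_congr rfl fun s _ => ?_
    rw [ENNReal.ofReal_prod_of_nonneg fun p _ => hblock_nonneg s p]
    exact prod_congr rfl fun p _ => measure_allowedValues_apply hmeas hnew hjoin hk s p

theorem crp_joint_block_probability_bounds_general
    {Ω : Type*} [MeasurableSpace Ω] (P : Measure Ω) [IsProbabilityMeasure P]
    (θ : ℝ) (hθ : 0 < θ) (I : ℕ → Ω → ℕ) (hmeas : ∀ n, Measurable (I n))
    (hindep : iIndepFun I P)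
    (hnew : ∀ n : ℕ, 1 ≤ n → P {ω | I n ω = n} = ENNReal.ofReal (θ / (θ + n - 1)))
    (hjoin : ∀ n k : ℕ, 1 ≤ k → k < n →
      P {ω | I n ω = k} = ENNReal.ofReal (1 / (θ + n - 1)))
    (r N : ℕ) (k : Fin r → Fin (N + 1) → ℕ)
    (hmono : ∀ s, StrictMono (k s)) (hpos : ∀ s, 1 ≤ k s 0)
    (hdisj : ∀ s p s' p', k s p = k s' p' → s = s' ∧ p = p')
    (hbig : ∀ s, 0 < θ + (k s (Fin.last N) : ℝ) - ((r : ℝ) + 1) * N - 1) :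
    ENNReal.ofReal (θ ^ r * ∏ s : Fin r,
        (N.factorial : ℝ) / (θ + (k s (Fin.last N) : ℝ)) ^ (N + 1)) ≤
      P (⋂ s : Fin r, crpBlockEvent I (k s)) ∧
    P (⋂ s : Fin r, crpBlockEvent I (k s)) ≤
      ENNReal.ofReal (θ ^ r * ∏ s : Fin r,
        (N.factorial : ℝ) /
          (θ + (k s (Fin.last N) : ℝ) - ((r : ℝ) + 1) * N - 1) ^ (N + 1)) := by
  have hk : IsBlockFamily k :=
    ⟨hmono, hpos, fun _ _ h => Prod.ext_iff.mpr (hdisj _ _ _ _ h)⟩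
  have hden := blockDenominator_pos (k := k) hθ
  rw [measure_iInter_crpBlockEvent hθ hmeas hindep hnew hjoin hk, ← Fin.prod_const,
    ← prod_mul_distrib, ← prod_mul_distrib]
  simp only [← mul_div_assoc]
  refine ⟨ENNReal.ofReal_le_ofReal (prod_le_prod (fun _ _ => by positivity) fun s _ => ?_),
    ENNReal.ofReal_le_ofReal (prod_le_prod (fun s _ => div_nonneg (by positivity) (hden s).le)
      fun s _ => ?_)⟩
  · exact div_le_div_of_nonneg_left (by positivity) (hden s) (blockDenominator_le_pow hk hθ.le s)
  · exact div_le_div_of_nonneg_left (by positivity) (pow_pos (hbig s) _)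
      (pow_le_blockDenominator hk s (hbig s).le)

theorem crp_joint_block_probability_bounds
    {Ω : Type*} [MeasurableSpace Ω] (P : Measure Ω) [IsProbabilityMeasure P]
    (θ : ℝ) (hθ : 0 < θ) (I : ℕ → Ω → ℕ) (hmeas : ∀ n, Measurable (I n))
    (hindep : iIndepFun I P)
    (hnew : ∀ n : ℕ, 1 ≤ n → P {ω | I n ω = n} = ENNReal.ofReal (θ / (θ + n - 1)))
    (hjoin : ∀ n k : ℕ, 1 ≤ k → k < n →
      P {ω | I n ω = k} = ENNReal.ofReal (1 / (θ + n - 1)))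
    (r N : ℕ) (hr : 1 ≤ r) (hN : 1 ≤ N) (k : Fin r → Fin (N + 1) → ℕ)
    (hmono : ∀ s, StrictMono (k s)) (hpos : ∀ s, 1 ≤ k s 0)
    (hdisj : ∀ s p s' p', k s p = k s' p' → s = s' ∧ p = p')
    (hbig : ∀ s, 0 < θ + (k s (Fin.last N) : ℝ) - ((r : ℝ) + 1) * N - 1) :
    ENNReal.ofReal (θ ^ r * ∏ s : Fin r,
        (N.factorial : ℝ) / (θ + (k s (Fin.last N) : ℝ)) ^ (N + 1)) ≤
      P (⋂ s : Fin r, crpBlockEvent I (k s)) ∧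
    P (⋂ s : Fin r, crpBlockEvent I (k s)) ≤
      ENNReal.ofReal (θ ^ r * ∏ s : Fin r,
        (N.factorial : ℝ) /
          (θ + (k s (Fin.last N) : ℝ) - ((r : ℝ) + 1) * N - 1) ^ (N + 1)) :=
  crp_joint_block_probability_bounds_general P θ hθ I hmeas hindep hnew hjoin r N k hmono hpos hdisj
    hbig
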